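/- arXiv:2409.04496 — 3 statements merged into one kernel-verified Lean document; each statement's English description precedes it below -/
import Mathlib

section
/- Let (E,d) be a complete separable metric space, Θ an index set, and (μ_n^θ)_{n≥1,θ∈Θ}, (μ^θ)_{θ∈Θ} Borel probability measures on E that are uniformly tight: for each ε>0 there is a compact K⊆E with sup_θ sup_n μ_n^θ(Kᶜ) + sup_θ μ^θ(Kᶜ) < ε. If for every bounded Lipschitz continuous f: E → ℝ one has sup_θ |∫ f dμ_n^θ − ∫ f dμ^θ| → 0 as n → ∞, then the same convergence holds for every bounded continuous f: E → ℝ. -/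
open MeasureTheory Set
open scoped NNReal

/-!
Replace a bounded continuous `f` by its inf-convolution `g = inf_y (f y + L d(·, y))`, which is
Lipschitz, bounded by the same constant, and lies below `f`. On a compact set `K` the uniform
continuity of `f` near `K` makes `f - g` uniformly small once `L` is large, while off `K` the
difference is at most `2M`, so uniform tightness controls it for all measures simultaneously.
The hypothesis for Lipschitz test functions applied to `g` then gives the uniform convergence
for `f`.
-/

theorem IsCompact.exists_pos_forall_dist_lt_of_continuous {α β : Type*} [PseudoMetricSpace α]
    [PseudoMetricSpace β] {K : Set α} {f : α → β} (hK : IsCompact K) (hf : Continuous f)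
    {ε : ℝ} (hε : 0 < ε) :
    ∃ δ > 0, ∀ x ∈ K, ∀ y, dist x y < δ → dist (f x) (f y) < ε := by
  obtain ⟨δ, hδ, hball⟩ := Metric.mem_uniformity_dist.mp <|
    hK.uniformContinuousAt_of_continuousAt f (fun _ _ => hf.continuousAt)
      (Metric.dist_mem_uniformity hε)
  exact ⟨δ, hδ, fun x hx y hxy => hball hxy hx⟩

section InfConvolution

variable {α : Type*} [PseudoMetricSpace α]

/-- The Pasch–Hausdorff envelope: the largest `L`-Lipschitz minorant of `f` when `f` is bounded
below. -/
noncomputable def infConvolution (f : α → ℝ) (L : ℝ≥0) (x : α) : ℝ :=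
  ⨅ y, f y + L * dist x y

variable {f : α → ℝ} {L : ℝ≥0} {M : ℝ}

theorem bddBelow_range_add_mul_dist (hf : ∀ y, -M ≤ f y) (x : α) :
    BddBelow (range fun y => f y + L * dist x y) :=
  ⟨-M, by
    rintro _ ⟨y, rfl⟩
    linarith [hf y, mul_nonneg L.coe_nonneg (dist_nonneg (x := x) (y := y))]⟩

theorem infConvolution_le (hf : ∀ y, -M ≤ f y) (x : α) : infConvolution f L x ≤ f x := by
  unfold infConvolution
  simpa using ciInf_le (bddBelow_range_add_mul_dist (L := L) hf x) x

theorem le_infConvolution (hf : ∀ y, -M ≤ f y) (x : α) : -M ≤ infConvolution f L x :=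
  have : Nonempty α := ⟨x⟩
  le_ciInf fun y => by linarith [hf y, mul_nonneg L.coe_nonneg (dist_nonneg (x := x) (y := y))]

theorem lipschitzWith_infConvolution (hf : ∀ y, -M ≤ f y) :
    LipschitzWith L (infConvolution f L) := by
  refine LipschitzWith.of_le_add_mul L fun x x' => ?_
  have : Nonempty α := ⟨x⟩
  rw [← sub_le_iff_le_add]
  refine le_ciInf fun y => ?_
  calc infConvolution f L x - L * dist x x'
      ≤ f y + L * dist x y - L * dist x x' := by
        gcongr; exact ciInf_le (bddBelow_range_add_mul_dist hf x) y
    _ ≤ f y + L * dist x' y := by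
        linarith [mul_le_mul_of_nonneg_left (dist_triangle x x' y) L.coe_nonneg]

theorem sub_infConvolution_le {x : α} {δ η : ℝ} (hη : 0 ≤ η)
    (hnear : ∀ y, dist x y < δ → f x - f y ≤ η) (hfar : ∀ y, f x - f y ≤ L * δ) :
    f x - infConvolution f L x ≤ η := by
  have : Nonempty α := ⟨x⟩
  suffices f x - η ≤ infConvolution f L x by linarith
  refine le_ciInf fun y => ?_
  rcases lt_or_ge (dist x y) δ with hy | hy
  · linarith [hnear y hy, mul_nonneg L.coe_nonneg (dist_nonneg (x := x) (y := y))]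
  · linarith [hfar y, mul_le_mul_of_nonneg_left hy L.coe_nonneg]

end InfConvolution

theorem exists_lipschitzWith_abs_sub_le_on_isCompact {α : Type*} [PseudoMetricSpace α]
    {f : α → ℝ} {K : Set α} {M η : ℝ} (hf : Continuous f) (hM : ∀ x, |f x| ≤ M)
    (hK : IsCompact K) (hη : 0 < η) :
    ∃ g : α → ℝ, (∃ C, LipschitzWith C g) ∧ (∀ x, |g x| ≤ M) ∧
      ∀ x ∈ K, |f x - g x| ≤ η := by
  obtain ⟨δ, hδ, hfδ⟩ := hK.exists_pos_forall_dist_lt_of_continuous hf hη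
  have hlow : ∀ y, -M ≤ f y := fun y => (abs_le.mp (hM y)).1
  -- with `L δ ≥ 2M`, points at distance `≥ δ` from `x` cannot pull the infimum below `f x`
  set L : ℝ≥0 := (2 * M / δ).toNNReal
  refine ⟨infConvolution f L, ⟨L, lipschitzWith_infConvolution hlow⟩,
    fun x => ?_, fun x hx => ?_⟩
  · exact abs_le.mpr ⟨le_infConvolution hlow x,
      (infConvolution_le hlow x).trans ((le_abs_self _).trans (hM x))⟩
  · have hfar : ∀ y, f x - f y ≤ L * δ := fun y => by
      have : 2 * M ≤ L * δ := by
        rw [← div_le_iff₀ hδ]; exact Real.le_coe_toNNReal _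
      linarith [abs_le.mp (hM x), abs_le.mp (hM y)]
    have hnear : ∀ y, dist x y < δ → f x - f y ≤ η := fun y hy =>
      (le_abs_self _).trans (Real.dist_eq _ _ ▸ hfδ x hx y hy).le
    rw [abs_of_nonneg (sub_nonneg.mpr (infConvolution_le hlow x))]
    exact sub_infConvolution_le hη.le hnear hfar

theorem abs_integral_sub_integral_le_of_abs_sub_le {Ω : Type*} [MeasurableSpace Ω]
    {m : Measure Ω} [IsProbabilityMeasure m] {f g : Ω → ℝ} (hf : Integrable f m)
    (hg : Integrable g m) {K : Set Ω} (hK : MeasurableSet K) {η C : ℝ} (hη : 0 ≤ η)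
    (hfgK : ∀ x ∈ K, |f x - g x| ≤ η) (hfg : ∀ x, |f x - g x| ≤ C) :
    |∫ x, f x ∂m - ∫ x, g x ∂m| ≤ η + C * m.real Kᶜ := by
  have hind : Integrable (Kᶜ.indicator fun _ => C) m := (integrable_const C).indicator hK.compl
  have hpt : ∀ x, |f x - g x| ≤ η + Kᶜ.indicator (fun _ => C) x := fun x => by
    by_cases hx : x ∈ K
    · simpa [hx] using hfgK x hx
    · simpa [hx] using hfg x |>.trans (le_add_of_nonneg_left hη)
  calc |∫ x, f x ∂m - ∫ x, g x ∂m| = |∫ x, f x - g x ∂m| := by rw [integral_sub hf hg]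
    _ ≤ ∫ x, |f x - g x| ∂m := abs_integral_le_integral_abs
    _ ≤ ∫ x, η + Kᶜ.indicator (fun _ => C) x ∂m :=
        integral_mono (hf.sub hg).abs ((integrable_const η).add hind) hpt
    _ = η + C * m.real Kᶜ := by
        rw [integral_add (integrable_const η) hind, integral_const,
          integral_indicator_const _ hK.compl]
        simp [mul_comm]

theorem stmt0_general
    {E : Type*} [MetricSpace E]
    [MeasurableSpace E] [BorelSpace E]
    {Θ : Type*}
    (μ : ℕ → Θ → Measure E) (ν : Θ → Measure E)
    (hμ : ∀ n θ, IsProbabilityMeasure (μ n θ)) (hν : ∀ θ, IsProbabilityMeasure (ν θ))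
    (htight : ∀ ε > (0 : ℝ), ∃ K : Set E, IsCompact K ∧
      ∀ n θ θ', ((μ n θ) Kᶜ).toReal + ((ν θ') Kᶜ).toReal < ε)
    (hLip : ∀ f : E → ℝ, (∃ C, LipschitzWith C f) → (∃ M, ∀ x, |f x| ≤ M) →
      ∀ ε > (0 : ℝ), ∃ N, ∀ n ≥ N, ∀ θ,
        |∫ x, f x ∂(μ n θ) - ∫ x, f x ∂(ν θ)| < ε) :
    ∀ f : E → ℝ, Continuous f → (∃ M, ∀ x, |f x| ≤ M) →
      ∀ ε > (0 : ℝ), ∃ N, ∀ n ≥ N, ∀ θ,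
        |∫ x, f x ∂(μ n θ) - ∫ x, f x ∂(ν θ)| < ε := by
  rintro f hf ⟨M₀, hM₀⟩ ε hε
  set M := max M₀ 1
  have hM : ∀ x, |f x| ≤ M := fun x => (hM₀ x).trans (le_max_left _ _)
  have hMpos : 0 < M := zero_lt_one.trans_le (le_max_right _ _)
  obtain ⟨K, hK, hKtight⟩ := htight (ε / (8 * M)) (by positivity)
  obtain ⟨g, ⟨C, hg⟩, hgM, hfgK⟩ :=
    exists_lipschitzWith_abs_sub_le_on_isCompact hf hM hK (by positivity : 0 < ε / 8)
  obtain ⟨N, hN⟩ := hLip g ⟨C, hg⟩ ⟨M, hgM⟩ (ε / 2) (by positivity)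
  have hclose : ∀ (m : Measure E) [IsProbabilityMeasure m],
      |∫ x, f x ∂m - ∫ x, g x ∂m| ≤ ε / 8 + 2 * M * m.real Kᶜ := fun m _ =>
    abs_integral_sub_integral_le_of_abs_sub_le
      (.of_bound hf.aestronglyMeasurable M (ae_of_all _ hM))
      (.of_bound hg.continuous.aestronglyMeasurable M (ae_of_all _ hgM))
      hK.isClosed.measurableSet (by positivity) hfgK
      fun x => (abs_sub _ _).trans (by linarith [hM x, hgM x])
  refine ⟨N, fun n hn θ => ?_⟩
  have htail : 2 * M * ((μ n θ).real Kᶜ + (ν θ).real Kᶜ) < ε / 4 := by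
    calc 2 * M * ((μ n θ).real Kᶜ + (ν θ).real Kᶜ) < 2 * M * (ε / (8 * M)) :=
          mul_lt_mul_of_pos_left (hKtight n θ θ) (by positivity)
      _ = ε / 4 := by field_simp; norm_num
  have hμθ := hclose (μ n θ)
  have hνθ := hclose (ν θ)
  rw [abs_sub_comm] at hνθ
  have htri₁ := abs_sub_le (∫ x, f x ∂μ n θ) (∫ x, g x ∂μ n θ) (∫ x, f x ∂ν θ)
  have htri₂ := abs_sub_le (∫ x, g x ∂μ n θ) (∫ x, g x ∂ν θ) (∫ x, f x ∂ν θ)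
  linarith [hN n hn θ]

/-- Uniform weak convergence upgrade: on a Polish space, uniform tightness plus
uniform convergence of integrals for bounded Lipschitz test functions implies
uniform convergence of integrals for all bounded continuous test functions. -/
theorem stmt0
    {E : Type*} [MetricSpace E] [CompleteSpace E] [TopologicalSpace.SeparableSpace E]
    [MeasurableSpace E] [BorelSpace E]
    {Θ : Type*}
    (μ : ℕ → Θ → Measure E) (ν : Θ → Measure E)
    (hμ : ∀ n θ, IsProbabilityMeasure (μ n θ)) (hν : ∀ θ, IsProbabilityMeasure (ν θ))
    (htight : ∀ ε > (0 : ℝ), ∃ K : Set E, IsCompact K ∧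
      ∀ n θ θ', ((μ n θ) Kᶜ).toReal + ((ν θ') Kᶜ).toReal < ε)
    (hLip : ∀ f : E → ℝ, (∃ C, LipschitzWith C f) → (∃ M, ∀ x, |f x| ≤ M) →
      ∀ ε > (0 : ℝ), ∃ N, ∀ n ≥ N, ∀ θ,
        |∫ x, f x ∂(μ n θ) - ∫ x, f x ∂(ν θ)| < ε) :
    ∀ f : E → ℝ, Continuous f → (∃ M, ∀ x, |f x| ≤ M) →
      ∀ ε > (0 : ℝ), ∃ N, ∀ n ≥ N, ∀ θ,
        |∫ x, f x ∂(μ n θ) - ∫ x, f x ∂(ν θ)| < ε :=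
  stmt0_general μ ν hμ hν htight hLip
end

section
/- Let (E,d), (E',d') be complete separable metric spaces, F: E → E' measurable with set of discontinuity points D_F, (X_n^θ), (X^θ) E-valued random variables. Suppose there exists a probability measure μ on E such that for each ε>0 there is δ>0 with: μ(A) < δ implies sup_θ P[X^θ ∈ A] < ε for all Borel A⊆E. If X_n^θ ⇒ X^θ weakly uniformly on Θ and P[X^θ ∈ D_F] = 0 for all θ, then F(X_n^θ) ⇒ F(X^θ) weakly uniformly on Θ. -/
/-!
Write `h = g ∘ F` and let `oscSet h κ t` be the open set of points near which `h` oscillates by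
more than `κ` at scale `t`. Off `oscSet h κ t`, `h` is approximated within `κ` by a bounded
Lipschitz function `ψ` (an inf-convolution of `h`), so uniform weak convergence for `ψ` transfers to
`h` up to `κ` plus the masses of `oscSet h κ t`. As `t → 0` these sets decrease into the
discontinuity set of `h`, which lies in that of `F`; hence their `μ`-mass off a null set tends to
`0`, the uniform domination by `μ` makes their mass small under every limit law at once, and testing
against a thickened indicator carries this over to the laws of `X n θ` for large `n`, uniformly
in `θ`.
-/

open MeasureTheory Filter Metric Set
open scoped BoundedContinuousFunction

lemma tendstoUniformly_atTop_iff_abs_sub_lt {Θ : Type*} {u : ℕ → Θ → ℝ} {v : Θ → ℝ} :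
    TendstoUniformly u v atTop ↔ ∀ ε > 0, ∃ N, ∀ n ≥ N, ∀ θ, |u n θ - v θ| < ε := by
  simp only [Metric.tendstoUniformly_iff, eventually_atTop, Real.dist_eq, abs_sub_comm (v _)]

lemma abs_integral_sub_le_add_mul_measureReal {α : Type*} [MeasurableSpace α] {ρ : Measure α}
    [IsProbabilityMeasure ρ] {u v : α → ℝ} (hu : Integrable u ρ) (hv : Integrable v ρ)
    {G : Set α} (hG : MeasurableSet G) {κ C : ℝ} (hκ : 0 ≤ κ)
    (hGc : ∀ x ∉ G, |u x - v x| ≤ κ) (hC : ∀ x, |u x - v x| ≤ C) :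
    |∫ x, u x ∂ρ - ∫ x, v x ∂ρ| ≤ κ + C * ρ.real G := by
  have hbound : ∀ x, |u x - v x| ≤ κ + G.indicator (fun _ => C) x := fun x => by
    by_cases hx : x ∈ G
    · simpa [indicator_of_mem hx] using (hC x).trans (le_add_of_nonneg_left hκ)
    · simpa [indicator_of_notMem hx] using hGc x hx
  calc |∫ x, u x ∂ρ - ∫ x, v x ∂ρ| = |∫ x, (u x - v x) ∂ρ| := by rw [integral_sub hu hv]
    _ ≤ ∫ x, |u x - v x| ∂ρ := abs_integral_le_integral_abs
    _ ≤ ∫ x, (κ + G.indicator (fun _ => C) x) ∂ρ :=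
      integral_mono (hu.sub hv).abs ((integrable_const κ).add ((integrable_const C).indicator hG))
        hbound
    _ = κ + C * ρ.real G := by
      rw [integral_add (integrable_const κ) ((integrable_const C).indicator hG), integral_const,
        integral_indicator_const _ hG]
      simp [mul_comm]

section Oscillation

variable {E : Type*} [PseudoMetricSpace E]

def oscSet (h : E → ℝ) (κ t : ℝ) : Set E :=
  ⋃ (a) (b) (_ : κ < |h a - h b|), ball a t ∩ ball b t

variable {h : E → ℝ} {κ t : ℝ}

lemma mem_oscSet {x : E} :
    x ∈ oscSet h κ t ↔ ∃ a b, κ < |h a - h b| ∧ dist x a < t ∧ dist x b < t := by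
  simp only [oscSet, mem_iUnion, mem_inter_iff, mem_ball, exists_prop]

lemma isOpen_oscSet : IsOpen (oscSet h κ t) :=
  isOpen_iUnion fun _ => isOpen_iUnion fun _ => isOpen_iUnion fun _ =>
    isOpen_ball.inter isOpen_ball

lemma oscSet_mono {t' : ℝ} (htt' : t ≤ t') : oscSet h κ t ⊆ oscSet h κ t' := by
  intro x hx
  obtain ⟨a, b, hab, ha, hb⟩ := mem_oscSet.1 hx
  exact mem_oscSet.2 ⟨a, b, hab, ha.trans_le htt', hb.trans_le htt'⟩

lemma thickening_oscSet_subset (s : ℝ) : thickening s (oscSet h κ t) ⊆ oscSet h κ (t + s) := by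
  intro x hx
  obtain ⟨z, hz, hxz⟩ := mem_thickening_iff.1 hx
  obtain ⟨a, b, hab, ha, hb⟩ := mem_oscSet.1 hz
  refine mem_oscSet.2 ⟨a, b, hab, ?_, ?_⟩
  · linarith [dist_triangle x z a]
  · linarith [dist_triangle x z b]

lemma sub_le_of_notMem_oscSet {x y : E} (hx : x ∉ oscSet h κ t) (hxy : dist x y < t) :
    h x - κ ≤ h y := by
  by_contra! hlt
  refine hx (mem_oscSet.2 ⟨x, y, ?_, by simpa using hxy.trans_le' dist_nonneg, hxy⟩)
  exact (lt_sub_comm.1 hlt).trans_le (le_abs_self _)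

lemma ContinuousAt.exists_notMem_oscSet {x : E} (hx : ContinuousAt h x) (hκ : 0 < κ) :
    ∃ t > 0, x ∉ oscSet h κ t := by
  obtain ⟨t, ht, hxt⟩ := Metric.continuousAt_iff.1 hx (κ / 2) (half_pos hκ)
  refine ⟨t, ht, fun hmem => ?_⟩
  obtain ⟨a, b, hab, ha, hb⟩ := mem_oscSet.1 hmem
  have hha := hxt (by rwa [dist_comm] at ha)
  have hhb := hxt (by rwa [dist_comm] at hb)
  rw [Real.dist_eq] at hha hhb
  have := abs_sub_le (h a) (h x) (h b)
  rw [abs_sub_comm (h x)] at this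
  linarith

/-- Take the inf-convolution `x ↦ ⨅ y, h y + L * dist x y` with `L = 2M / r`: points `y` farther
than `r` from `x` cost at least `L * r = 2M`, so they cannot pull it below `h x - κ`. -/
lemma exists_boundedContinuous_le_of_sub_le {M r : ℝ} (hM : ∀ x, |h x| ≤ M) (hκ : 0 ≤ κ)
    (hr : 0 < r) (s : Set E) (hs : ∀ x ∈ s, ∀ y, dist x y < r → h x - κ ≤ h y) :
    ∃ ψ : E →ᵇ ℝ, (∀ x, -M ≤ ψ x ∧ ψ x ≤ h x) ∧ ∀ x ∈ s, h x - κ ≤ ψ x := by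
  set L := 2 * M / r
  set φ : E → ℝ := fun x => ⨅ y, h y + L * dist x y
  have hL : ∀ x : E, 0 ≤ L := fun x => by have := (abs_nonneg _).trans (hM x); positivity
  have hbdd : ∀ x, BddBelow (range fun y => h y + L * dist x y) := fun x =>
    ⟨-M, by
      rintro _ ⟨y, rfl⟩
      nlinarith [(abs_le.1 (hM y)).1, mul_nonneg (hL x) (dist_nonneg (x := x) (y := y))]⟩
  have hφ_le : ∀ x, φ x ≤ h x := fun x => by simpa using ciInf_le (hbdd x) x
  have hφ_ge : ∀ x, -M ≤ φ x := fun x =>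
    have : Nonempty E := ⟨x⟩
    le_ciInf fun y => by
      nlinarith [(abs_le.1 (hM y)).1, mul_nonneg (hL x) (dist_nonneg (x := x) (y := y))]
  have hlip : LipschitzWith L.toNNReal φ := LipschitzWith.of_le_add_mul _ fun x x' => by
    have : Nonempty E := ⟨x⟩
    rw [Real.coe_toNNReal _ (hL x), ← sub_le_iff_le_add]
    refine le_ciInf fun y => ?_
    have := ciInf_le (hbdd x) y
    nlinarith [dist_triangle x x' y, hL x]
  refine ⟨.ofNormedAddCommGroup φ hlip.continuous M fun x => ?_, fun x => ⟨hφ_ge x, hφ_le x⟩,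
    fun x hx => have : Nonempty E := ⟨x⟩; le_ciInf fun y => ?_⟩
  · exact abs_le.2 ⟨hφ_ge x, (hφ_le x).trans (abs_le.1 (hM x)).2⟩
  rcases lt_or_ge (dist x y) r with hxy | hxy
  · nlinarith [hs x hx y hxy, mul_nonneg (hL x) (dist_nonneg (x := x) (y := y))]
  · have hLr : L * r = 2 * M := div_mul_cancel₀ _ hr.ne'
    nlinarith [(abs_le.1 (hM y)).1, (abs_le.1 (hM x)).2, mul_le_mul_of_nonneg_left hxy (hL x)]

end Oscillation

section Measure

variable {E : Type*} [PseudoMetricSpace E] [MeasurableSpace E] [OpensMeasurableSpace E]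

lemma measurableSet_setOf_not_continuousAt {E' : Type*} [TopologicalSpace E']
    [TopologicalSpace.PseudoMetrizableSpace E'] (F : E → E') :
    MeasurableSet {x | ¬ContinuousAt F x} :=
  (IsGδ.setOfPred_continuousAt F).measurableSet.compl

/-- Away from the discontinuity set of `h`, the sets `oscSet h κ t` shrink to `∅` as `t → 0`. -/
lemma exists_measure_oscSet_diff_lt (μ : Measure E) [IsFiniteMeasure μ] (h : E → ℝ) {κ : ℝ}
    (hκ : 0 < κ) {δ : ENNReal} (hδ : 0 < δ) :
    ∃ t > 0, μ (oscSet h κ t \ {x | ¬ContinuousAt h x}) < δ := by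
  set S : ℕ → Set E := fun n => oscSet h κ (1 / (n + 1)) \ {x | ¬ContinuousAt h x}
  have hS_empty : ⋂ n, S n = ∅ := by
    refine eq_empty_of_forall_notMem fun x hx => ?_
    have hxS := mem_iInter.1 hx
    obtain ⟨t, ht, hxt⟩ := (not_not.1 (hxS 0).2).exists_notMem_oscSet hκ
    obtain ⟨n, hn⟩ := exists_nat_one_div_lt ht
    exact hxt (oscSet_mono hn.le (hxS n).1)
  have hS_anti : Antitone S := fun m n hmn =>
    sdiff_subset_sdiff_left (oscSet_mono (Nat.one_div_le_one_div hmn))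
  have hlim := tendsto_measure_iInter_atTop
    (fun n => (isOpen_oscSet.measurableSet.diff
      (measurableSet_setOf_not_continuousAt h)).nullMeasurableSet) hS_anti
    ⟨0, measure_ne_top μ _⟩
  rw [hS_empty, measure_empty] at hlim
  obtain ⟨n, hn⟩ := (hlim.eventually (gt_mem_nhds hδ)).exists
  exact ⟨1 / (n + 1), Nat.one_div_pos_of_nat, hn⟩

variable {Θ : Type*}

lemma exists_forall_measureReal_oscSet_lt (μ : Measure E) [IsFiniteMeasure μ]
    (ν : Θ → Measure E) [∀ θ, IsFiniteMeasure (ν θ)]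
    (hdom : ∀ ε > (0 : ℝ), ∃ δ > (0 : ℝ), ∀ A : Set E, MeasurableSet A →
      μ A < ENNReal.ofReal δ → ∀ θ, ν θ A < ENNReal.ofReal ε)
    (h : E → ℝ) (hcont : ∀ θ, ν θ {x | ¬ContinuousAt h x} = 0) {κ η : ℝ} (hκ : 0 < κ)
    (hη : 0 < η) : ∃ t > 0, ∀ θ, (ν θ).real (oscSet h κ t) < η := by
  obtain ⟨δ, hδ, hA⟩ := hdom η hη
  obtain ⟨t, ht, hμt⟩ := exists_measure_oscSet_diff_lt μ h hκ (ENNReal.ofReal_pos.2 hδ)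
  refine ⟨t, ht, fun θ => ENNReal.toReal_lt_of_lt_ofReal ?_⟩
  rw [← measure_sdiff_null (hcont θ)]
  exact hA _ (isOpen_oscSet.measurableSet.diff (measurableSet_setOf_not_continuousAt h)) hμt θ

lemma eventually_forall_measureReal_le_thickening (ν : ℕ → Θ → Measure E) (ν' : Θ → Measure E)
    [∀ n θ, IsFiniteMeasure (ν n θ)] [∀ θ, IsFiniteMeasure (ν' θ)]
    (hweak : ∀ f : E →ᵇ ℝ,
      TendstoUniformly (fun n θ => ∫ x, f x ∂ν n θ) (fun θ => ∫ x, f x ∂ν' θ) atTop)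
    (G : Set E) {r η : ℝ} (hr : 0 < r) (hη : 0 < η) :
    ∀ᶠ n in atTop, ∀ θ, (ν n θ).real G ≤ (ν' θ).real (thickening r G) + η := by
  set χ : E →ᵇ ℝ := (thickenedIndicator hr G).comp _ NNReal.isometry_coe.lipschitz
  have hχ_le_one : ∀ x, χ x ≤ 1 := fun x => by
    change ((thickenedIndicator hr G x : NNReal) : ℝ) ≤ 1
    exact_mod_cast thickenedIndicator_le_one hr G x
  have hχ_nonneg : ∀ x, 0 ≤ χ x := fun x => NNReal.coe_nonneg _
  have hle_integral (ρ : Measure E) [IsFiniteMeasure ρ] : ρ.real G ≤ ∫ x, χ x ∂ρ := by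
    calc ρ.real G ≤ ρ.real (closure G) := measureReal_mono subset_closure
      _ = ∫ x, (closure G).indicator 1 x ∂ρ := (integral_indicator_one measurableSet_closure).symm
      _ ≤ ∫ x, χ x ∂ρ := by
        refine integral_mono ((integrable_const 1).indicator measurableSet_closure)
          (χ.integrable ρ) fun x => ?_
        by_cases hx : x ∈ closure G
        · simp [indicator_of_mem hx, χ, thickenedIndicator_one_of_mem_closure hr G hx]
        · simpa [indicator_of_notMem hx] using hχ_nonneg x
  have hintegral_le (ρ : Measure E) [IsFiniteMeasure ρ] :
      ∫ x, χ x ∂ρ ≤ ρ.real (thickening r G) := by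
    calc ∫ x, χ x ∂ρ ≤ ∫ x, (thickening r G).indicator 1 x ∂ρ := by
          refine integral_mono (χ.integrable ρ)
            ((integrable_const 1).indicator isOpen_thickening.measurableSet) fun x => ?_
          by_cases hx : x ∈ thickening r G
          · simpa [indicator_of_mem hx] using hχ_le_one x
          · simp [indicator_of_notMem hx, χ, thickenedIndicator_zero hr G hx]
      _ = ρ.real (thickening r G) := integral_indicator_one isOpen_thickening.measurableSet
  filter_upwards [Metric.tendstoUniformly_iff.1 (hweak χ) η hη] with n hn θ
  have := (abs_lt.1 (Real.dist_eq _ _ ▸ hn θ)).1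
  linarith [hle_integral (ν n θ), hintegral_le (ν' θ)]

theorem tendstoUniformly_integral_of_measureReal_oscSet_lt (ν : ℕ → Θ → Measure E)
    (ν' : Θ → Measure E) [∀ n θ, IsProbabilityMeasure (ν n θ)] [∀ θ, IsProbabilityMeasure (ν' θ)]
    (hweak : ∀ f : E →ᵇ ℝ,
      TendstoUniformly (fun n θ => ∫ x, f x ∂ν n θ) (fun θ => ∫ x, f x ∂ν' θ) atTop)
    {h : E → ℝ} (hh : Measurable h) (hbdd : ∃ M, ∀ x, |h x| ≤ M)
    (hosc : ∀ κ > 0, ∀ η > 0, ∃ t > 0, ∀ θ, (ν' θ).real (oscSet h κ t) < η) :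
    TendstoUniformly (fun n θ => ∫ x, h x ∂ν n θ) (fun θ => ∫ x, h x ∂ν' θ) atTop := by
  obtain ⟨M, hM0, hM⟩ : ∃ M ≥ 0, ∀ x, |h x| ≤ M := let ⟨M, hM⟩ := hbdd
    ⟨max M 0, le_max_right _ _, fun x => (hM x).trans (le_max_left _ _)⟩
  rw [Metric.tendstoUniformly_iff]
  intro ε hε
  set κ := ε / 4
  set η := ε / (4 * (6 * M + 1))
  have hκ : 0 < κ := by positivity
  have hκε : 4 * κ = ε := mul_div_cancel₀ _ four_ne_zero
  have hη : 0 < η := by positivity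
  have hηε : 4 * (6 * M + 1) * η = ε := mul_div_cancel₀ _ (by positivity)
  obtain ⟨t, ht, hsmall⟩ := hosc κ hκ η hη
  set G := oscSet h κ (t / 2)
  obtain ⟨ψ, hψ_bdd, hψ_approx⟩ := exists_boundedContinuous_le_of_sub_le hM hκ.le (half_pos ht)
    Gᶜ fun x hx y hxy => sub_le_of_notMem_oscSet hx hxy
  have herr (ρ : Measure E) [IsProbabilityMeasure ρ] :
      |∫ x, h x ∂ρ - ∫ x, ψ x ∂ρ| ≤ κ + 2 * M * ρ.real G := by
    refine abs_integral_sub_le_add_mul_measureReal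
      (.of_bound hh.aestronglyMeasurable M (ae_of_all _ hM)) (ψ.integrable ρ)
      isOpen_oscSet.measurableSet hκ.le (fun x hx => ?_) (fun x => ?_)
    · have := hψ_approx x hx
      have := (hψ_bdd x).2
      exact abs_le.2 ⟨by linarith, by linarith⟩
    · have := hψ_bdd x
      have := abs_le.1 (hM x)
      exact abs_le.2 ⟨by linarith, by linarith⟩
  have hG_lim (θ : Θ) : (ν' θ).real G < η :=
    (measureReal_mono (oscSet_mono (half_le_self ht.le))).trans_lt (hsmall θ)
  filter_upwards [eventually_forall_measureReal_le_thickening ν ν' hweak G (half_pos ht) hη,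
    Metric.tendstoUniformly_iff.1 (hweak ψ) η hη] with n hG hψ θ
  have hG_n : (ν n θ).real G < 2 * η := by
    have : (ν' θ).real (thickening (t / 2) G) ≤ (ν' θ).real (oscSet h κ t) :=
      measureReal_mono ((thickening_oscSet_subset _).trans_eq (by rw [add_halves]))
    linarith [hG θ, hsmall θ]
  have e₁ := herr (ν n θ)
  have e₂ := herr (ν' θ)
  have e₃ := hψ θ
  rw [Real.dist_eq] at e₃ ⊢
  have hMG_n := mul_le_mul_of_nonneg_left hG_n.le hM0
  have hMG_lim := mul_le_mul_of_nonneg_left (hG_lim θ).le hM0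
  rw [abs_lt] at e₃ ⊢
  rw [abs_le] at e₁ e₂
  constructor <;> linarith [e₁.1, e₁.2, e₂.1, e₂.2]

end Measure

theorem stmt3_general
    {E E' : Type*} [MetricSpace E]
    [MeasurableSpace E] [BorelSpace E]
    [MetricSpace E']
    [MeasurableSpace E'] [BorelSpace E']
    {Θ : Type*} {Ω : Type*} [MeasurableSpace Ω] (P : Measure Ω) [IsProbabilityMeasure P]
    (X : ℕ → Θ → Ω → E) (Y : Θ → Ω → E) (F : E → E')
    (hXmeas : ∀ n θ, Measurable (X n θ)) (hYmeas : ∀ θ, Measurable (Y θ))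
    (hFmeas : Measurable F)
    (μ : Measure E) (hμ : IsProbabilityMeasure μ)
    (hdom : ∀ ε > (0 : ℝ), ∃ δ > (0 : ℝ), ∀ A : Set E, MeasurableSet A →
      μ A < ENNReal.ofReal δ → ∀ θ, P (Y θ ⁻¹' A) < ENNReal.ofReal ε)
    (hweak : ∀ f : BoundedContinuousFunction E ℝ, ∀ ε > (0 : ℝ), ∃ N, ∀ n ≥ N, ∀ θ,
      |∫ ω, f (X n θ ω) ∂P - ∫ ω, f (Y θ ω) ∂P| < ε)
    (hcont : ∀ θ, P (Y θ ⁻¹' {x | ¬ ContinuousAt F x}) = 0) :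
    ∀ g : BoundedContinuousFunction E' ℝ, ∀ ε > (0 : ℝ), ∃ N, ∀ n ≥ N, ∀ θ,
      |∫ ω, g (F (X n θ ω)) ∂P - ∫ ω, g (F (Y θ ω)) ∂P| < ε := by
  intro g
  have := fun n θ => Measure.isProbabilityMeasure_map (μ := P) (hXmeas n θ).aemeasurable
  have := fun θ => Measure.isProbabilityMeasure_map (μ := P) (hYmeas θ).aemeasurable
  have hgF : Measurable (g ∘ F) := g.continuous.measurable.comp hFmeas
  have hmap {Z : Ω → E} (hZ : Measurable Z) {f : E → ℝ} (hf : Measurable f) :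
      ∫ x, f x ∂P.map Z = ∫ ω, f (Z ω) ∂P :=
    integral_map hZ.aemeasurable hf.aestronglyMeasurable
  have hcont' (θ : Θ) : P.map (Y θ) {x | ¬ContinuousAt (g ∘ F) x} = 0 :=
    measure_mono_null (t := {x | ¬ContinuousAt F x})
      (fun x hx hF => hx (g.continuous.continuousAt.comp hF))
      (by rw [Measure.map_apply (hYmeas θ) (measurableSet_setOf_not_continuousAt F)]
          exact hcont θ)
  have hdom' : ∀ ε > (0 : ℝ), ∃ δ > (0 : ℝ), ∀ A : Set E, MeasurableSet A →
      μ A < ENNReal.ofReal δ → ∀ θ, P.map (Y θ) A < ENNReal.ofReal ε := fun ε hε => by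
    obtain ⟨δ, hδ, hA⟩ := hdom ε hε
    exact ⟨δ, hδ, fun A hA' hμA θ => (Measure.map_apply (hYmeas θ) hA').trans_lt (hA A hA' hμA θ)⟩
  have key := tendstoUniformly_integral_of_measureReal_oscSet_lt (fun n θ => P.map (X n θ))
    (fun θ => P.map (Y θ))
    (fun f => tendstoUniformly_atTop_iff_abs_sub_lt.2 (by
      simpa only [hmap (hXmeas _ _) f.continuous.measurable,
        hmap (hYmeas _) f.continuous.measurable] using hweak f))
    hgF ⟨‖g‖, fun x => g.norm_coe_le_norm (F x)⟩
    (fun κ hκ η hη => exists_forall_measureReal_oscSet_lt μ _ hdom' _ hcont' hκ hη)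
  rw [tendstoUniformly_atTop_iff_abs_sub_lt] at key
  simp only [hmap (hXmeas _ _) hgF, hmap (hYmeas _) hgF] at key
  exact key

/-- Uniform continuous mapping theorem for weak convergence uniformly on Θ, under a
uniform absolute-continuity-type domination of the limit laws and a.s. continuity of F. -/
theorem stmt3
    {E E' : Type*} [MetricSpace E] [CompleteSpace E] [TopologicalSpace.SeparableSpace E]
    [MeasurableSpace E] [BorelSpace E]
    [MetricSpace E'] [CompleteSpace E'] [TopologicalSpace.SeparableSpace E']
    [MeasurableSpace E'] [BorelSpace E']
    {Θ : Type*} {Ω : Type*} [MeasurableSpace Ω] (P : Measure Ω) [IsProbabilityMeasure P]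
    (X : ℕ → Θ → Ω → E) (Y : Θ → Ω → E) (F : E → E')
    (hXmeas : ∀ n θ, Measurable (X n θ)) (hYmeas : ∀ θ, Measurable (Y θ))
    (hFmeas : Measurable F)
    (μ : Measure E) (hμ : IsProbabilityMeasure μ)
    (hdom : ∀ ε > (0 : ℝ), ∃ δ > (0 : ℝ), ∀ A : Set E, MeasurableSet A →
      μ A < ENNReal.ofReal δ → ∀ θ, P (Y θ ⁻¹' A) < ENNReal.ofReal ε)
    (hweak : ∀ f : BoundedContinuousFunction E ℝ, ∀ ε > (0 : ℝ), ∃ N, ∀ n ≥ N, ∀ θ,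
      |∫ ω, f (X n θ ω) ∂P - ∫ ω, f (Y θ ω) ∂P| < ε)
    (hcont : ∀ θ, P (Y θ ⁻¹' {x | ¬ ContinuousAt F x}) = 0) :
    ∀ g : BoundedContinuousFunction E' ℝ, ∀ ε > (0 : ℝ), ∃ N, ∀ n ≥ N, ∀ θ,
      |∫ ω, g (F (X n θ ω)) ∂P - ∫ ω, g (F (Y θ ω)) ∂P| < ε :=
  stmt3_general P X Y F hXmeas hYmeas hFmeas μ hμ hdom hweak hcont
end

section
/- Let X be the Volterra CIR process satisfying the variation-of-constants representation X_t = E[X_t] + σ∫₀^t E_β(t−s)√(X_s) dB_s with E[X_t] = 𝓔_β(t)x₀ + b∫₀^t E_β(s)ds, where K satisfies (K1), β < 0, and E_β ∈ L¹(ℝ₊)∩L²(ℝ₊). Then the second moment satisfies E[X_t²] = (E[X_t])² + σ² ∫₀^t E_β(t−s)² E[X_s] ds, and as t → ∞, E[X_t] → m₁ = (x₀ + ‖K‖_{L¹} b)/(1 + ‖K‖_{L¹}|β|) and E[X_t²] → m₁² + m₁ σ² ∫₀^∞ E_β(s)² ds. -/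
open MeasureTheory intervalIntegral Set Filter

/-- Complete monotonicity on `(0,∞)`. -/
def CompletelyMonotoneOn (K : ℝ → ℝ) : Prop :=
  ∀ (n : ℕ) (t : ℝ), 0 < t → 0 ≤ (-1 : ℝ) ^ n * iteratedDeriv n K t

/-- Condition (K1). -/
def CondK1 (K : ℝ → ℝ) : Prop :=
  CompletelyMonotoneOn K ∧ (∃ t > (0:ℝ), K t ≠ 0) ∧
  (∀ T > (0 : ℝ), IntegrableOn (fun t => K t ^ 2) (Ioc 0 T)) ∧
  ∃ γ ∈ Ioc (0:ℝ) 1, ∃ M : ℝ, ∀ s t : ℝ, 0 ≤ s → s ≤ t → t - s ≤ 1 →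
    (t - s) ^ (-(2 * γ)) *
      ((∫ r in s..t, K r ^ 2) + ∫ r in Ioi (0:ℝ), (K ((t - s) + r) - K r) ^ 2) ≤ M

/-! Since `K ≥ 0` by complete monotonicity, integrating the resolvent equation
`E_β = K + β K ∗ E_β` over `(0, ∞)` gives `∫ E_β = ‖K‖ / (1 + ‖K‖ |β|)`, hence the limit of the
mean. The second-moment identity is `E[X²] = E[X]² + Var X` combined with the Itô isometry; its
limit follows by dominated convergence, the mean being continuous and convergent, hence bounded. -/

open Topology

lemma CompletelyMonotoneOn.nonneg {K : ℝ → ℝ} (hK : CompletelyMonotoneOn K) {t : ℝ}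
    (ht : 0 < t) : 0 ≤ K t := by
  simpa using hK 0 t ht

lemma integral_resolvent_mul_sub {K E : ℝ → ℝ} {β : ℝ} (hK : IntegrableOn K (Ioi 0))
    (hE : IntegrableOn E (Ioi 0))
    (hEeq : ∀ t > (0:ℝ), E t = K t + β * ∫ s in (0:ℝ)..t, K (t - s) * E s) :
    (∫ t in Ioi (0:ℝ), E t) * (1 - β * ∫ t in Ioi (0:ℝ), K t) = ∫ t in Ioi (0:ℝ), K t := by
  have hconv : ∫ t in Ioi (0:ℝ), ∫ s in (0:ℝ)..t, K (t - s) * E s =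
      (∫ t in Ioi (0:ℝ), E t) * ∫ t in Ioi (0:ℝ), K t := by
    simpa only [ContinuousLinearMap.mul_apply', mul_comm (K _)] using
      integral_posConvolution hE hK (ContinuousLinearMap.mul ℝ ℝ)
  have hconv_int : IntegrableOn (fun t => ∫ s in (0:ℝ)..t, K (t - s) * E s) (Ioi 0) := by
    have h := integrable_posConvolution hE hK (ContinuousLinearMap.mul ℝ ℝ)
    unfold posConvolution at h
    rw [integrable_indicator_iff measurableSet_Ioi] at h
    simpa only [ContinuousLinearMap.mul_apply', mul_comm (E _)] using h
  have hint : ∫ t in Ioi (0:ℝ), E t = (∫ t in Ioi (0:ℝ), K t) +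
      β * ((∫ t in Ioi (0:ℝ), E t) * ∫ t in Ioi (0:ℝ), K t) := by
    rw [← hconv, ← MeasureTheory.integral_const_mul, ← integral_add hK (hconv_int.const_mul β)]
    exact setIntegral_congr_fun measurableSet_Ioi hEeq
  linear_combination hint

lemma tendsto_resolvent_mean {K E : ℝ → ℝ} {β : ℝ} (x₀ b : ℝ) (hKnn : ∀ t > (0:ℝ), 0 ≤ K t)
    (hK : IntegrableOn K (Ioi 0)) (hβ : β ≤ 0) (hE : IntegrableOn E (Ioi 0))
    (hEeq : ∀ t > (0:ℝ), E t = K t + β * ∫ s in (0:ℝ)..t, K (t - s) * E s) :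
    Tendsto (fun t => (1 + β * ∫ s in (0:ℝ)..t, E s) * x₀ + b * ∫ s in (0:ℝ)..t, E s) atTop
      (𝓝 ((x₀ + (∫ t in Ioi (0:ℝ), K t) * b) / (1 + (∫ t in Ioi (0:ℝ), K t) * |β|))) := by
  have hA : 0 ≤ ∫ t in Ioi (0:ℝ), K t := setIntegral_nonneg measurableSet_Ioi hKnn
  have hlim : Tendsto (fun t => ∫ s in (0:ℝ)..t, E s) atTop (𝓝 (∫ t in Ioi (0:ℝ), E t)) :=
    intervalIntegral_tendsto_integral_Ioi 0 hE tendsto_id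
  have hvalue : (x₀ + (∫ t in Ioi (0:ℝ), K t) * b) / (1 + (∫ t in Ioi (0:ℝ), K t) * |β|) =
      (1 + β * ∫ t in Ioi (0:ℝ), E t) * x₀ + b * ∫ t in Ioi (0:ℝ), E t := by
    rw [abs_of_nonpos hβ, div_eq_iff (by nlinarith)]
    linear_combination (-(β * x₀ + b)) * integral_resolvent_mul_sub hK hE hEeq
  rw [hvalue]
  exact ((tendsto_const_nhds.add (hlim.const_mul β)).mul_const x₀).add (hlim.const_mul b)

lemma continuousOn_primitive_Ici {f : ℝ → ℝ} {a : ℝ} (hf : IntegrableOn f (Ioi a)) :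
    ContinuousOn (fun t => ∫ s in a..t, f s) (Ici a) := by
  have hf' : Integrable ((Ioi a).indicator f) := (integrable_indicator_iff measurableSet_Ioi).2 hf
  refine (continuous_primitive (fun _ _ => hf'.intervalIntegrable) a).continuousOn.congr
    fun t (ht : a ≤ t) => ?_
  simp only [integral_of_le ht]
  exact setIntegral_congr_fun measurableSet_Ioc fun s hs => (indicator_of_mem hs.1 f).symm

lemma ContinuousOn.exists_bound_of_tendsto_atTop {g : ℝ → ℝ} {a L : ℝ}
    (hg : ContinuousOn g (Ici a)) (hL : Tendsto g atTop (𝓝 L)) :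
    ∃ C, ∀ s ≥ a, |g s| ≤ C := by
  obtain ⟨T, hT⟩ := eventually_atTop.1 (hL.abs.eventually_le_const (lt_add_one |L|))
  obtain ⟨C, hC⟩ := (isCompact_Icc (a := a) (b := T)).exists_bound_of_continuousOn
    (hg.mono Icc_subset_Ici_self)
  refine ⟨max C (|L| + 1), fun s hs => ?_⟩
  rcases le_total s T with hsT | hTs
  · exact le_max_of_le_left (hC s ⟨hs, hsT⟩)
  · exact le_max_of_le_right (hT s hTs)

lemma tendsto_integral_comp_sub_mul {f g : ℝ → ℝ} {L : ℝ} (hf : IntegrableOn f (Ioi 0))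
    (hg : ContinuousOn g (Ici 0)) (hL : Tendsto g atTop (𝓝 L)) :
    Tendsto (fun t => ∫ s in (0:ℝ)..t, f (t - s) * g s) atTop
      (𝓝 ((∫ s in Ioi (0:ℝ), f s) * L)) := by
  obtain ⟨C, hC⟩ := hg.exists_bound_of_tendsto_atTop hL
  set F : ℝ → ℝ → ℝ := fun t => (Ioc 0 t).indicator fun u => f u * g (t - u)
  have hrepr : ∀ t ≥ (0:ℝ), ∫ s in (0:ℝ)..t, f (t - s) * g s = ∫ u in Ioi (0:ℝ), F t u := by
    intro t ht
    have hsub := integral_comp_sub_left (a := 0) (b := t) (fun u => f u * g (t - u)) t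
    simp only [sub_sub_cancel, sub_zero, sub_self] at hsub
    rw [hsub, integral_of_le ht, MeasureTheory.integral_indicator measurableSet_Ioc,
      Measure.restrict_restrict measurableSet_Ioc, inter_eq_left.2 Ioc_subset_Ioi_self]
  have hF_meas : ∀ t, AEStronglyMeasurable (F t) (volume.restrict (Ioi 0)) := fun t =>
    (aestronglyMeasurable_indicator_iff measurableSet_Ioc).2 <|
      hf.aestronglyMeasurable.restrict.mul <| ContinuousOn.aestronglyMeasurable
        (hg.comp (continuousOn_const.sub continuousOn_id) fun u hu => sub_nonneg.2 hu.2)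
        measurableSet_Ioc
  have hF_bound : ∀ t u, ‖F t u‖ ≤ C * ‖f u‖ := by
    intro t u
    by_cases hu : u ∈ Ioc 0 t
    · rw [show F t u = _ from indicator_of_mem hu _, norm_mul, mul_comm]
      exact mul_le_mul_of_nonneg_right (hC _ (sub_nonneg.2 hu.2)) (norm_nonneg _)
    · rw [show F t u = 0 from indicator_of_notMem hu _, norm_zero]
      exact mul_nonneg ((abs_nonneg _).trans (hC 0 le_rfl)) (norm_nonneg _)
  have hF_lim : ∀ u > (0:ℝ), Tendsto (fun t => F t u) atTop (𝓝 (f u * L)) := by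
    intro u hu
    have hshift : Tendsto (fun t => t - u) atTop atTop := by
      simpa only [id, sub_eq_add_neg] using tendsto_atTop_add_const_right atTop (-u) tendsto_id
    refine ((hL.comp hshift).const_mul (f u)).congr' ?_
    filter_upwards [eventually_ge_atTop u] with t htu
    exact (indicator_of_mem (show u ∈ Ioc 0 t from ⟨hu, htu⟩) fun u => f u * g (t - u)).symm
  rw [← MeasureTheory.integral_mul_const]
  refine (tendsto_integral_filter_of_dominated_convergence _ (.of_forall hF_meas)
    (.of_forall fun t => ae_of_all _ (hF_bound t)) (hf.norm.const_mul C)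
    ((ae_restrict_iff' measurableSet_Ioi).2 (ae_of_all _ hF_lim))).congr' ?_
  filter_upwards [eventually_ge_atTop 0] with t ht
  exact (hrepr t ht).symm

lemma integral_sq_eq_sq_integral_add {Ω : Type*} [MeasurableSpace Ω] {P : Measure Ω}
    [IsProbabilityMeasure P] {Y : Ω → ℝ} (hY : MemLp Y 2 P) :
    ∫ ω, Y ω ^ 2 ∂P = (∫ ω, Y ω ∂P) ^ 2 + ∫ ω, (Y ω - ∫ ω', Y ω' ∂P) ^ 2 ∂P := by
  rw [← ProbabilityTheory.variance_eq_integral hY.aemeasurable,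
    ProbabilityTheory.variance_eq_sub hY]
  simp only [Pi.pow_apply]
  ring

theorem stmt17_general
    (K : ℝ → ℝ) (hK1 : CondK1 K) (hKL1 : IntegrableOn K (Ioi 0))
    (β σ b x₀ : ℝ) (hβ : β < 0)
    (Eb : ℝ → ℝ)
    (hEeq : ∀ t > (0:ℝ), Eb t = K t + β * ∫ s in (0:ℝ)..t, K (t - s) * Eb s)
    (hEL1 : IntegrableOn Eb (Ioi 0))
    (hEL2 : IntegrableOn (fun t => Eb t ^ 2) (Ioi 0))
    {Ω : Type*} [MeasurableSpace Ω] (P : Measure Ω) [IsProbabilityMeasure P]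
    (X : ℝ → Ω → ℝ)
    (hXmeas : ∀ t, Measurable (X t))
    (hXint : ∀ t ≥ (0:ℝ), Integrable (fun ω => (X t ω) ^ 2) P)
    -- the mean: E[X_t] = 𝓔_β(t) x₀ + b ∫₀^t E_β(s) ds
    (hmean : ∀ t ≥ (0:ℝ), ∫ ω, X t ω ∂P =
      (1 + β * ∫ s in (0:ℝ)..t, Eb s) * x₀ + b * ∫ s in (0:ℝ)..t, Eb s)
    -- Itô isometry for the martingale part X_t − E[X_t] = σ ∫₀^t E_β(t−s)√(X_s) dB_s
    (hiso : ∀ t ≥ (0:ℝ), ∫ ω, (X t ω - ∫ ω', X t ω' ∂P) ^ 2 ∂P =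
      σ ^ 2 * ∫ s in (0:ℝ)..t, (Eb (t - s)) ^ 2 * ∫ ω, X s ω ∂P) :
    (∀ t ≥ (0:ℝ), ∫ ω, (X t ω) ^ 2 ∂P =
      (∫ ω, X t ω ∂P) ^ 2 + σ ^ 2 * ∫ s in (0:ℝ)..t, (Eb (t - s)) ^ 2 * ∫ ω, X s ω ∂P) ∧
    Tendsto (fun t => ∫ ω, X t ω ∂P) atTop
      (nhds ((x₀ + (∫ t in Ioi (0:ℝ), K t) * b) / (1 + (∫ t in Ioi (0:ℝ), K t) * |β|))) ∧
    Tendsto (fun t => ∫ ω, (X t ω) ^ 2 ∂P) atTop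
      (nhds (((x₀ + (∫ t in Ioi (0:ℝ), K t) * b) / (1 + (∫ t in Ioi (0:ℝ), K t) * |β|)) ^ 2
        + ((x₀ + (∫ t in Ioi (0:ℝ), K t) * b) / (1 + (∫ t in Ioi (0:ℝ), K t) * |β|))
          * σ ^ 2 * ∫ s in Ioi (0:ℝ), Eb s ^ 2)) := by
  set m : ℝ → ℝ := fun t => (1 + β * ∫ s in (0:ℝ)..t, Eb s) * x₀ + b * ∫ s in (0:ℝ)..t, Eb s
  have hm_lim := tendsto_resolvent_mean x₀ b (fun t ht => hK1.1.nonneg ht) hKL1 hβ.le hEL1 hEeq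
  have hm_cont : ContinuousOn m (Ici 0) :=
    have hprim := continuousOn_primitive_Ici hEL1
    ((continuousOn_const.add (hprim.const_smul β)).mul continuousOn_const).add
      (hprim.const_smul b)
  have hsecond : ∀ t ≥ (0:ℝ), ∫ ω, (X t ω) ^ 2 ∂P =
      (∫ ω, X t ω ∂P) ^ 2 + σ ^ 2 * ∫ s in (0:ℝ)..t, (Eb (t - s)) ^ 2 * ∫ ω, X s ω ∂P :=
    fun t ht => by
      rw [← hiso t ht]
      exact integral_sq_eq_sq_integral_add
        ((memLp_two_iff_integrable_sq (hXmeas t).aestronglyMeasurable).2 (hXint t ht))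
  have hconv : ∀ t ≥ (0:ℝ), ∫ s in (0:ℝ)..t, (Eb (t - s)) ^ 2 * ∫ ω, X s ω ∂P =
      ∫ s in (0:ℝ)..t, (Eb (t - s)) ^ 2 * m s := fun t ht =>
    integral_congr fun s hs => by rw [hmean s (uIcc_of_le ht ▸ hs).1]
  refine ⟨hsecond, hm_lim.congr' ?_, ?_⟩
  · filter_upwards [eventually_ge_atTop 0] with t ht
    exact (hmean t ht).symm
  · have hlim := (hm_lim.pow 2).add
      ((tendsto_integral_comp_sub_mul hEL2 hm_cont hm_lim).const_mul (σ ^ 2))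
    convert! hlim.congr' ?_ using 2
    · ring
    · filter_upwards [eventually_ge_atTop 0] with t ht
      rw [hsecond t ht, hconv t ht, hmean t ht]

/-- Second-moment identity and first/second moment asymptotics for the Volterra CIR
process, encoded through its variation-of-constants representation: the mean is
`m(t) = 𝓔_β(t)x₀ + b∫₀^t E_β`, and the Itô isometry for the martingale part gives
the variance formula. -/
theorem stmt17
    (K : ℝ → ℝ) (hK1 : CondK1 K) (hKL1 : IntegrableOn K (Ioi 0))
    (β σ b x₀ : ℝ) (hβ : β < 0) (hσ : 0 ≤ σ) (hb : 0 ≤ b) (hx₀ : 0 ≤ x₀)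
    (Eb : ℝ → ℝ)
    (hEeq : ∀ t > (0:ℝ), Eb t = K t + β * ∫ s in (0:ℝ)..t, K (t - s) * Eb s)
    (hEL1 : IntegrableOn Eb (Ioi 0))
    (hEL2 : IntegrableOn (fun t => Eb t ^ 2) (Ioi 0))
    {Ω : Type*} [MeasurableSpace Ω] (P : Measure Ω) [IsProbabilityMeasure P]
    (X : ℝ → Ω → ℝ)
    (hXmeas : ∀ t, Measurable (X t))
    (hXnn : ∀ t ω, 0 ≤ X t ω)
    (hXint : ∀ t ≥ (0:ℝ), Integrable (fun ω => (X t ω) ^ 2) P)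
    -- the mean: E[X_t] = 𝓔_β(t) x₀ + b ∫₀^t E_β(s) ds
    (hmean : ∀ t ≥ (0:ℝ), ∫ ω, X t ω ∂P =
      (1 + β * ∫ s in (0:ℝ)..t, Eb s) * x₀ + b * ∫ s in (0:ℝ)..t, Eb s)
    -- Itô isometry for the martingale part X_t − E[X_t] = σ ∫₀^t E_β(t−s)√(X_s) dB_s
    (hiso : ∀ t ≥ (0:ℝ), ∫ ω, (X t ω - ∫ ω', X t ω' ∂P) ^ 2 ∂P =
      σ ^ 2 * ∫ s in (0:ℝ)..t, (Eb (t - s)) ^ 2 * ∫ ω, X s ω ∂P) :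
    (∀ t ≥ (0:ℝ), ∫ ω, (X t ω) ^ 2 ∂P =
      (∫ ω, X t ω ∂P) ^ 2 + σ ^ 2 * ∫ s in (0:ℝ)..t, (Eb (t - s)) ^ 2 * ∫ ω, X s ω ∂P) ∧
    Tendsto (fun t => ∫ ω, X t ω ∂P) atTop
      (nhds ((x₀ + (∫ t in Ioi (0:ℝ), K t) * b) / (1 + (∫ t in Ioi (0:ℝ), K t) * |β|))) ∧
    Tendsto (fun t => ∫ ω, (X t ω) ^ 2 ∂P) atTop
      (nhds (((x₀ + (∫ t in Ioi (0:ℝ), K t) * b) / (1 + (∫ t in Ioi (0:ℝ), K t) * |β|)) ^ 2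
        + ((x₀ + (∫ t in Ioi (0:ℝ), K t) * b) / (1 + (∫ t in Ioi (0:ℝ), K t) * |β|))
          * σ ^ 2 * ∫ s in Ioi (0:ℝ), Eb s ^ 2)) :=
  stmt17_general K hK1 hKL1 β σ b x₀ hβ Eb hEeq hEL1 hEL2 P X hXmeas hXint hmean hiso
end
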